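/- arXiv:2108.05237 — 3 statements merged into one kernel-verified Lean document; each statement's English description precedes it below -/
import Mathlib

section
/- For two linear subspaces A and B of V with A ⊥ B, the variation function of the direct sum equals the sum of the variation functions: 𝔎_{A ⊕ B} = 𝔎_A + 𝔎_B pointwise. -/
open scoped Pointwise RealInnerProductSpace

/-!
For a subspace `K`, Cauchy–Schwarz against the orthogonal projection `P_K` gives
`𝔎_K(i) = ‖P_K eᵢ‖²`, with the supremum attained at `a = P_K eᵢ`. For `A ⊥ B` the projection
onto `A ⊕ B` is `P_A + P_B`, and Pythagoras splits `‖P_A eᵢ + P_B eᵢ‖²`.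
-/

/-- The variation function of a set `A ⊆ ℝ^N`:
`𝔎_A(i) = sup_{a ∈ A \ {0}} a_i² / ‖a‖²`. -/
noncomputable def varFun {N : ℕ} (A : Set (EuclideanSpace ℝ (Fin N))) (i : Fin N) : ℝ :=
  ⨆ a : {a : EuclideanSpace ℝ (Fin N) // a ∈ A ∧ a ≠ 0}, (a.1 i) ^ 2 / ‖a.1‖ ^ 2

namespace Submodule

variable {𝕜 E : Type*} [RCLike 𝕜] [NormedAddCommGroup E] [InnerProductSpace 𝕜 E]

theorem inner_starProjection_left_of_mem (K : Submodule 𝕜 E) [K.HasOrthogonalProjection]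
    (x : E) {a : E} (ha : a ∈ K) : inner 𝕜 (K.starProjection x) a = inner 𝕜 x a := by
  rw [inner_starProjection_left_eq_right, starProjection_eq_self_iff.mpr ha]

theorem IsOrtho.starProjection_sup {U V : Submodule 𝕜 E} [U.HasOrthogonalProjection]
    [V.HasOrthogonalProjection] [(U ⊔ V).HasOrthogonalProjection] (hUV : U ⟂ V) (x : E) :
    (U ⊔ V).starProjection x = U.starProjection x + V.starProjection x := by
  refine eq_starProjection_of_mem_of_inner_eq_zero
    (add_mem_sup (U.starProjection_apply_mem x) (V.starProjection_apply_mem x)) fun w hw => ?_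
  obtain ⟨u, hu, v, hv, rfl⟩ := mem_sup.mp hw
  have hVu : inner 𝕜 (V.starProjection x) u = 0 :=
    hUV.symm.inner_eq (V.starProjection_apply_mem x) hu
  have hUv : inner 𝕜 (U.starProjection x) v = 0 :=
    hUV.inner_eq (U.starProjection_apply_mem x) hv
  simp only [inner_add_right, inner_sub_left, inner_add_left,
    U.inner_starProjection_left_of_mem x hu, V.inner_starProjection_left_of_mem x hv, hVu, hUv]
  ring

end Submodule

theorem iSup_inner_sq_div_norm_sq_eq_norm_starProjection_sq {E : Type*}
    [NormedAddCommGroup E] [InnerProductSpace ℝ E] (K : Submodule ℝ E)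
    [K.HasOrthogonalProjection] (x : E) :
    ⨆ a : {a : E // a ∈ K ∧ a ≠ 0}, ⟪a.1, x⟫ ^ 2 / ‖a.1‖ ^ 2 = ‖K.starProjection x‖ ^ 2 := by
  set p := K.starProjection x
  have hle : ∀ a : {a : E // a ∈ K ∧ a ≠ 0}, ⟪a.1, x⟫ ^ 2 / ‖a.1‖ ^ 2 ≤ ‖p‖ ^ 2 := by
    rintro ⟨a, ha, ha0⟩
    rw [div_le_iff₀ (by positivity), real_inner_comm, ← K.inner_starProjection_left_of_mem x ha,
      ← mul_pow]
    exact sq_le_sq' (neg_le_of_abs_le (abs_real_inner_le_norm _ _)) (real_inner_le_norm _ _)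
  refine le_antisymm (Real.iSup_le hle (by positivity)) ?_
  rcases eq_or_ne p 0 with hp | hp
  · rw [hp, norm_zero, sq, zero_mul]
    exact Real.iSup_nonneg fun a => by positivity
  · have hpx : ⟪p, x⟫ = ‖p‖ ^ 2 := by
      rw [real_inner_comm, ← K.inner_starProjection_left_of_mem x (K.starProjection_apply_mem x),
        real_inner_self_eq_norm_sq]
    refine le_ciSup_of_le ⟨‖p‖ ^ 2, Set.forall_mem_range.mpr hle⟩
      ⟨p, K.starProjection_apply_mem x, hp⟩ ?_
    rw [hpx, sq (‖p‖ ^ 2), mul_div_cancel_right₀ _ (by positivity)]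

theorem varFun_coe_submodule {N : ℕ} (K : Submodule ℝ (EuclideanSpace ℝ (Fin N))) (i : Fin N) :
    varFun K i = ‖K.starProjection (EuclideanSpace.single i 1)‖ ^ 2 := by
  rw [← iSup_inner_sq_div_norm_sq_eq_norm_starProjection_sq]
  simp only [varFun, EuclideanSpace.inner_single_right, one_mul, conj_trivial]
  rfl

/-- For orthogonal linear subspaces `A ⊥ B`, the variation function of the direct sum
equals the sum of the variation functions: `𝔎_{A ⊕ B} = 𝔎_A + 𝔎_B` pointwise. -/
theorem varFun_directSum {N : ℕ} (A B : Submodule ℝ (EuclideanSpace ℝ (Fin N)))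
    (hAB : ∀ a ∈ A, ∀ b ∈ B, ⟪a, b⟫ = 0) :
    ∀ i, varFun ((A : Set (EuclideanSpace ℝ (Fin N))) + (B : Set (EuclideanSpace ℝ (Fin N)))) i
      = varFun (A : Set (EuclideanSpace ℝ (Fin N))) i
        + varFun (B : Set (EuclideanSpace ℝ (Fin N))) i := by
  intro i
  rw [← Submodule.coe_sup, varFun_coe_submodule, varFun_coe_submodule, varFun_coe_submodule,
    (Submodule.isOrtho_iff_inner_eq.mpr hAB).starProjection_sup,
    norm_add_sq_real, hAB _ (A.starProjection_apply_mem _) _ (B.starProjection_apply_mem _),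
    mul_zero, add_zero]
end

section
/- If M ⊆ V is a symmetric and conic set (λM ⊆ M for λ > 0 and −M = M) and v ∈ V, then the variation function of {v} − M equals the variation function of span{v} + cl(M): 𝔎_{{v}−M} = 𝔎_{⟨v⟩ + cl(M)}. -/
open scoped Pointwise

/-! The variation function only sees a set through the closed sets stable under all scalar
multiplications that contain it, namely its sublevel sets `varSublevel i c`. On the other hand,
every closed set `S` stable under scalar multiplication that contains `{v} - M` also contains
`t • v + m` for `t ≠ 0` (as `t • (v - (-t⁻¹ • m))`), hence for `t = 0` by closedness, and hence
`⟨v⟩ + cl M`. -/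

section ScalarClosed

variable {E : Type*} [AddCommGroup E] [Module ℝ E] {M S : Set E}

theorem smul_mem_of_conic_of_neg_eq (hconic : ∀ l : ℝ, 0 < l → ∀ m ∈ M, l • m ∈ M)
    (hsymm : -M = M) {t : ℝ} (ht : t ≠ 0) {m : E} (hm : m ∈ M) : t • m ∈ M := by
  rcases ht.lt_or_gt with ht | ht
  · have hneg : -((-t) • m) ∈ M :=
      hsymm ▸ Set.neg_mem_neg.mpr (hconic (-t) (neg_pos.mpr ht) m hm)
    simpa using hneg
  · exact hconic t ht m hm

variable [TopologicalSpace E]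

theorem singleton_sub_subset_span_add_closure (hsymm : -M = M) (v : E) :
    {v} - M ⊆ (Submodule.span ℝ {v} : Set E) + closure M := by
  rintro _ ⟨_, rfl, m, hm, rfl⟩
  exact ⟨_, Submodule.mem_span_singleton_self _, -m,
    subset_closure (hsymm ▸ Set.neg_mem_neg.mpr hm), (sub_eq_add_neg _ m).symm⟩

variable [IsTopologicalAddGroup E] [ContinuousSMul ℝ E]

theorem smul_add_mem_of_singleton_sub_subset (hconic : ∀ l : ℝ, 0 < l → ∀ m ∈ M, l • m ∈ M)
    (hsymm : -M = M) (hS : IsClosed S) (hSsmul : ∀ t : ℝ, ∀ x ∈ S, t • x ∈ S) {v : E}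
    (hvM : {v} - M ⊆ S) (t : ℝ) {m : E} (hm : m ∈ M) : t • v + m ∈ S := by
  have hne : ∀ t : ℝ, t ≠ 0 → t • v + m ∈ S := fun t ht => by
    have hsub : v - (-t⁻¹) • m ∈ S :=
      hvM ⟨v, rfl, _, smul_mem_of_conic_of_neg_eq hconic hsymm (by simpa using ht) hm, rfl⟩
    convert hSsmul t _ hsub using 1
    rw [smul_sub, smul_smul, mul_neg, mul_inv_cancel₀ ht, neg_smul, one_smul, sub_neg_eq_add]
  have hclosed : IsClosed {t : ℝ | t • v + m ∈ S} := hS.preimage (by fun_prop)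
  exact hclosed.closure_subset_iff.mpr hne
    ((dense_compl_singleton (0 : ℝ)).closure_eq ▸ Set.mem_univ t)

theorem span_add_closure_subset_of_singleton_sub_subset
    (hconic : ∀ l : ℝ, 0 < l → ∀ m ∈ M, l • m ∈ M) (hsymm : -M = M) (hS : IsClosed S)
    (hSsmul : ∀ t : ℝ, ∀ x ∈ S, t • x ∈ S) {v : E} (hvM : {v} - M ⊆ S) :
    (Submodule.span ℝ {v} : Set E) + closure M ⊆ S := by
  rintro _ ⟨_, hw, c, hc, rfl⟩
  obtain ⟨t, rfl⟩ := Submodule.mem_span_singleton.mp hw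
  exact hS.closure_eq ▸ map_mem_closure (continuous_const_add (t • v)) hc
    fun m hm => smul_add_mem_of_singleton_sub_subset hconic hsymm hS hSsmul hvM t hm

end ScalarClosed

section VariationFunction

variable {N : ℕ}

def varSublevel (i : Fin N) (c : ℝ) : Set (EuclideanSpace ℝ (Fin N)) :=
  {a | a ≠ 0 → a i ^ 2 / ‖a‖ ^ 2 ≤ c}

theorem sq_apply_div_sq_norm_le_one (a : EuclideanSpace ℝ (Fin N)) (i : Fin N) :
    a i ^ 2 / ‖a‖ ^ 2 ≤ 1 := by
  refine div_le_one_of_le₀ ?_ (sq_nonneg _)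
  simpa only [Real.norm_eq_abs, sq_abs] using pow_le_pow_left₀ (norm_nonneg _)
    (PiLp.norm_apply_le a i) 2

theorem isClosed_varSublevel (i : Fin N) (c : ℝ) : IsClosed (varSublevel i c) := by
  have hcont : ContinuousOn (fun a : EuclideanSpace ℝ (Fin N) => a i ^ 2 / ‖a‖ ^ 2) {0}ᶜ :=
    ContinuousOn.div (by fun_prop) (by fun_prop) fun a ha => by simpa using ha
  have hopen := hcont.isOpen_inter_preimage isOpen_compl_singleton (isOpen_Ioi (a := c))
  rw [← isOpen_compl_iff]
  convert hopen using 1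
  ext a
  simp [varSublevel]

theorem smul_mem_varSublevel {i : Fin N} {c : ℝ} (t : ℝ) {a : EuclideanSpace ℝ (Fin N)}
    (ha : a ∈ varSublevel i c) : t • a ∈ varSublevel i c := by
  intro hta
  obtain ⟨ht, ha0⟩ := smul_ne_zero_iff.mp hta
  convert ha ha0 using 1
  simp only [PiLp.smul_apply, smul_eq_mul, norm_smul, mul_pow, Real.norm_eq_abs, sq_abs]
  exact mul_div_mul_left _ _ (pow_ne_zero 2 ht)

theorem varFun_nonneg (A : Set (EuclideanSpace ℝ (Fin N))) (i : Fin N) : 0 ≤ varFun A i :=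
  Real.iSup_nonneg fun _ => by positivity

theorem subset_varSublevel_varFun (A : Set (EuclideanSpace ℝ (Fin N))) (i : Fin N) :
    A ⊆ varSublevel i (varFun A i) := fun a ha ha0 =>
  le_ciSup (f := fun a : {a // a ∈ A ∧ a ≠ 0} => a.1 i ^ 2 / ‖a.1‖ ^ 2)
    ⟨1, by rintro _ ⟨b, rfl⟩; exact sq_apply_div_sq_norm_le_one b.1 i⟩ ⟨a, ha, ha0⟩

theorem varFun_le_of_subset_varSublevel {A : Set (EuclideanSpace ℝ (Fin N))} {i : Fin N}
    {c : ℝ} (hc : 0 ≤ c) (hA : A ⊆ varSublevel i c) : varFun A i ≤ c :=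
  Real.iSup_le (fun a => hA a.2.1 a.2.2) hc

theorem varFun_mono {A B : Set (EuclideanSpace ℝ (Fin N))} (h : A ⊆ B) (i : Fin N) :
    varFun A i ≤ varFun B i :=
  varFun_le_of_subset_varSublevel (varFun_nonneg B i) (h.trans (subset_varSublevel_varFun B i))

end VariationFunction

/-- If `M` is conic and symmetric, then for any `v`:
`𝔎_{{v} − M} = 𝔎_{⟨v⟩ + cl(M)}`. -/
theorem varFun_singleton_sub_conic {N : ℕ} (M : Set (EuclideanSpace ℝ (Fin N)))
    (v : EuclideanSpace ℝ (Fin N))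
    (hconic : ∀ (l : ℝ), 0 < l → ∀ m ∈ M, l • m ∈ M)
    (hsymm : -M = M) :
    varFun (({v} : Set (EuclideanSpace ℝ (Fin N))) - M)
      = varFun ((Submodule.span ℝ {v} : Set (EuclideanSpace ℝ (Fin N))) + closure M) := by
  funext i
  refine le_antisymm (varFun_mono (singleton_sub_subset_span_add_closure hsymm v) i) ?_
  exact varFun_le_of_subset_varSublevel (varFun_nonneg _ i)
    (span_add_closure_subset_of_singleton_sub_subset hconic hsymm (isClosed_varSublevel i _)
      (fun t _ => smul_mem_varSublevel t) (subset_varSublevel_varFun _ i))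
end

section
/- Let V = ℝ^{d₁×d₂} with norm ‖v‖ := ‖v‖_Fro/√(d₁d₂), let M be the set of rank-1 matrices, 𝟙 the all-ones matrix, and Δ = e_i e_j^⊤ a standard basis matrix. Then the variation function of {𝟙} − M at entry (i,j) satisfies 𝔎_{{𝟙}−M}(i,j) ≥ d₁d₂, with equality to the ambient value 𝔎_V(i,j) = d₁d₂. -/
open scoped Pointwise

/-- The variation function of a set `S ⊆ ℝ^{d₁×d₂}` at entry `(i,j)`:
`𝔎_S(i,j) = sup_{s ∈ S \ {0}} s_{ij}² / ‖s‖²` with `‖s‖² = ‖s‖²_Fro/(d₁d₂)`. -/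
noncomputable def varFunMat {d₁ d₂ : ℕ} (S : Set (Matrix (Fin d₁) (Fin d₂) ℝ))
    (i : Fin d₁) (j : Fin d₂) : ℝ :=
  ⨆ s : {s : Matrix (Fin d₁) (Fin d₂) ℝ // s ∈ S ∧ s ≠ 0},
    (s.1 i j) ^ 2 / ((∑ k, ∑ l, (s.1 k l) ^ 2) / ((d₁ : ℝ) * d₂))

/-!
Every ratio `s_ij² / ‖s‖²` is at most `d₁d₂`, since `s_ij² ≤ ‖s‖²_Fro`, and the basis matrix
`e_i e_jᵀ` attains it. For `{𝟙} − M` the bound is approached but not attained: with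
`u = 𝟙 + (a - 1) e_i` and `v = 𝟙 + (a - 1) e_j`, the matrix `𝟙 - u vᵀ` vanishes outside row `i`
and column `j`, has `(i,j)`-entry `1 - a²` and all other entries of that cross equal to `1 - a`,
so its ratio is `(1 + a)² d₁d₂ / ((1 + a)² + d₁ + d₂ - 2)`, which tends to `d₁d₂` as `a → ∞`.
-/

open Filter Topology Matrix

theorem Fintype.sum_comp_update_one {ι R M : Type*} [Fintype ι] [DecidableEq ι] [One R]
    [AddCommMonoid M] (f : R → M) (j : ι) (a : R) :
    ∑ l, f (Function.update (1 : ι → R) j a l) = f a + (Fintype.card ι - 1) • f 1 := by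
  rw [Fintype.sum_eq_add_sum_compl j, Function.update_self,
    Finset.sum_congr rfl fun l hl => by
      rw [Function.update_of_ne (Finset.mem_compl.1 hl ∘ Finset.mem_singleton.2), Pi.one_apply],
    Finset.sum_const, Finset.card_compl, Finset.card_singleton]

lemma tendsto_sq_mul_div_sq_add (D c : ℝ) :
    Tendsto (fun x : ℝ => x ^ 2 * D / (x ^ 2 + c)) atTop (𝓝 D) := by
  have hinv : Tendsto (fun x : ℝ => (x ^ 2)⁻¹) atTop (𝓝 0) :=
    tendsto_inv_atTop_zero.comp (tendsto_pow_atTop two_ne_zero)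
  have h : Tendsto (fun x : ℝ => D / (1 + c * (x ^ 2)⁻¹)) atTop (𝓝 (D / (1 + c * 0))) :=
    tendsto_const_nhds.div (tendsto_const_nhds.add (hinv.const_mul c)) (by norm_num)
  rw [mul_zero, add_zero, div_one] at h
  refine h.congr' ?_
  filter_upwards [eventually_ne_atTop 0] with x hx
  field_simp

section

variable {d₁ d₂ : ℕ}

noncomputable def entryRatio (s : Matrix (Fin d₁) (Fin d₂) ℝ) (i : Fin d₁) (j : Fin d₂) : ℝ :=
  s i j ^ 2 / ((∑ k, ∑ l, s k l ^ 2) / ((d₁ : ℝ) * d₂))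

lemma varFunMat_eq_iSup_entryRatio (S : Set (Matrix (Fin d₁) (Fin d₂) ℝ)) (i : Fin d₁)
    (j : Fin d₂) : varFunMat S i j = ⨆ s : {s // s ∈ S ∧ s ≠ 0}, entryRatio s.1 i j :=
  rfl

lemma sq_apply_le_sum_sq (s : Matrix (Fin d₁) (Fin d₂) ℝ) (i : Fin d₁) (j : Fin d₂) :
    s i j ^ 2 ≤ ∑ k, ∑ l, s k l ^ 2 :=
  calc s i j ^ 2 ≤ ∑ l, s i l ^ 2 :=
        Finset.single_le_sum (fun _ _ => sq_nonneg _) (Finset.mem_univ j)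
    _ ≤ ∑ k, ∑ l, s k l ^ 2 :=
        Finset.single_le_sum (f := fun k => ∑ l, s k l ^ 2)
          (fun _ _ => Finset.sum_nonneg fun _ _ => sq_nonneg _) (Finset.mem_univ i)

lemma entryRatio_le (s : Matrix (Fin d₁) (Fin d₂) ℝ) (i : Fin d₁) (j : Fin d₂) :
    entryRatio s i j ≤ d₁ * d₂ := by
  rw [entryRatio, div_div_eq_mul_div]
  exact div_le_of_le_mul₀
    (Finset.sum_nonneg fun _ _ => Finset.sum_nonneg fun _ _ => sq_nonneg _) (by positivity)
    (by rw [mul_comm]; gcongr; exact sq_apply_le_sum_sq s i j)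

lemma varFunMat_le (S : Set (Matrix (Fin d₁) (Fin d₂) ℝ)) (i : Fin d₁) (j : Fin d₂) :
    varFunMat S i j ≤ d₁ * d₂ := by
  rw [varFunMat_eq_iSup_entryRatio]
  exact Real.iSup_le (fun s => entryRatio_le s.1 i j) (by positivity)

lemma entryRatio_le_varFunMat {S : Set (Matrix (Fin d₁) (Fin d₂) ℝ)}
    {s : Matrix (Fin d₁) (Fin d₂) ℝ} (hs : s ∈ S) (hs₀ : s ≠ 0) (i : Fin d₁) (j : Fin d₂) :
    entryRatio s i j ≤ varFunMat S i j := by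
  rw [varFunMat_eq_iSup_entryRatio]
  exact le_ciSup (f := fun s : {s // s ∈ S ∧ s ≠ 0} => entryRatio s.1 i j)
    ⟨d₁ * d₂, by rintro _ ⟨s, rfl⟩; exact entryRatio_le s.1 i j⟩ ⟨s, hs, hs₀⟩

lemma entryRatio_single (i : Fin d₁) (j : Fin d₂) {c : ℝ} (hc : c ≠ 0) :
    entryRatio (single i j c) i j = d₁ * d₂ := by
  have hsum : ∑ k, ∑ l, single i j c k l ^ 2 = c ^ 2 := by
    simp [single_apply, ite_pow, ite_and]
  rw [entryRatio, hsum, single_apply_same]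
  field_simp

noncomputable def onesSubRankOne (i : Fin d₁) (j : Fin d₂) (a : ℝ) : Matrix (Fin d₁) (Fin d₂) ℝ :=
  of (fun _ _ => 1) - vecMulVec (Function.update 1 i a) (Function.update 1 j a)

lemma onesSubRankOne_mem (i : Fin d₁) (j : Fin d₂) (a : ℝ) :
    onesSubRankOne i j a ∈
      ({of fun _ _ => 1} : Set (Matrix (Fin d₁) (Fin d₂) ℝ)) - {m | m.rank ≤ 1} :=
  Set.sub_mem_sub rfl (rank_vecMulVec_le _ _)

lemma onesSubRankOne_apply_self (i : Fin d₁) (j : Fin d₂) (a : ℝ) :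
    onesSubRankOne i j a i j = 1 - a * a := by
  simp [onesSubRankOne, vecMulVec_apply]

lemma sum_sq_onesSubRankOne (i : Fin d₁) (j : Fin d₂) (a : ℝ) :
    ∑ k, ∑ l, onesSubRankOne i j a k l ^ 2
      = (1 - a * a) ^ 2 + ((d₁ - 1 : ℕ) + (d₂ - 1 : ℕ)) * (1 - a) ^ 2 := by
  simp only [onesSubRankOne, Matrix.sub_apply, of_apply, vecMulVec_apply]
  rw [Fintype.sum_comp_update_one
      (fun x => ∑ l, (1 - x * Function.update (1 : Fin d₂ → ℝ) j a l) ^ 2),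
    Fintype.sum_comp_update_one (fun y => (1 - a * y) ^ 2),
    Fintype.sum_comp_update_one (fun y => (1 - 1 * y) ^ 2)]
  simp only [Fintype.card_fin, nsmul_eq_mul]
  ring

lemma entryRatio_onesSubRankOne (i : Fin d₁) (j : Fin d₂) {a : ℝ} (ha : a ≠ 1) :
    entryRatio (onesSubRankOne i j a) i j
      = (1 + a) ^ 2 * (d₁ * d₂) / ((1 + a) ^ 2 + ((d₁ - 1 : ℕ) + (d₂ - 1 : ℕ))) := by
  set c : ℝ := (d₁ - 1 : ℕ) + (d₂ - 1 : ℕ)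
  have hnum : (1 - a * a) ^ 2 = (1 + a) ^ 2 * (1 - a) ^ 2 := by ring
  have hden : (1 - a * a) ^ 2 + c * (1 - a) ^ 2 = ((1 + a) ^ 2 + c) * (1 - a) ^ 2 := by ring
  rw [entryRatio, onesSubRankOne_apply_self, sum_sq_onesSubRankOne, hden, hnum,
    div_div_eq_mul_div, mul_right_comm,
    mul_div_mul_right _ _ (pow_ne_zero 2 (sub_ne_zero.2 ha.symm))]

lemma le_varFunMat_ones_sub_rank_one (i : Fin d₁) (j : Fin d₂) :
    (d₁ : ℝ) * d₂ ≤ varFunMat (({of fun _ _ => 1} : Set _) - {m | m.rank ≤ 1}) i j := by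
  have hlim : Tendsto (fun a => entryRatio (onesSubRankOne i j a) i j) atTop (𝓝 (d₁ * d₂)) := by
    refine ((tendsto_sq_mul_div_sq_add _ ((d₁ - 1 : ℕ) + (d₂ - 1 : ℕ))).comp
      (tendsto_atTop_add_const_left _ 1 tendsto_id)).congr' ?_
    filter_upwards [eventually_gt_atTop 1] with a ha
    exact (entryRatio_onesSubRankOne i j ha.ne').symm
  refine le_of_tendsto hlim ?_
  filter_upwards [eventually_gt_atTop 1] with a ha
  have hne : onesSubRankOne i j a ≠ 0 := ne_of_apply_ne (fun s => s i j) <| by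
    simp only [onesSubRankOne_apply_self, Matrix.zero_apply]
    nlinarith
  exact entryRatio_le_varFunMat (onesSubRankOne_mem i j a) hne i j

lemma varFunMat_univ (i : Fin d₁) (j : Fin d₂) : varFunMat Set.univ i j = d₁ * d₂ :=
  (varFunMat_le _ i j).antisymm <| (entryRatio_single i j one_ne_zero).symm.trans_le <|
    entryRatio_le_varFunMat (Set.mem_univ _)
      (ne_of_apply_ne (fun s : Matrix (Fin d₁) (Fin d₂) ℝ => s i j) (by simp)) i j

end

/-- For `M` the set of matrices of rank at most `1` and `𝟙` the all-ones matrix,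
the variation function of `{𝟙} − M` at any entry `(i,j)` satisfies
`𝔎_{{𝟙}−M}(i,j) ≥ d₁d₂`, with equality to the ambient value `𝔎_V(i,j) = d₁d₂`. -/
theorem varFunMat_ones_sub_rank_one {d₁ d₂ : ℕ} (i : Fin d₁) (j : Fin d₂)
    (M : Set (Matrix (Fin d₁) (Fin d₂) ℝ)) (hM : M = {m | m.rank ≤ 1}) :
    (d₁ : ℝ) * d₂ ≤ varFunMat (({Matrix.of fun _ _ => (1 : ℝ)} : Set _) - M) i j ∧
      varFunMat (({Matrix.of fun _ _ => (1 : ℝ)} : Set _) - M) i j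
        = varFunMat (Set.univ : Set (Matrix (Fin d₁) (Fin d₂) ℝ)) i j ∧
      varFunMat (Set.univ : Set (Matrix (Fin d₁) (Fin d₂) ℝ)) i j = (d₁ : ℝ) * d₂ := by
  subst hM
  have hlower := le_varFunMat_ones_sub_rank_one i j
  rw [varFunMat_univ]
  exact ⟨hlower, (varFunMat_le _ i j).antisymm hlower, rfl⟩
end
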